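/- (Birman–Schwinger correspondence, direction ii) Suppose μ > 0, z > max_{p,q} E(K;p,q), Δ_μ(K,p;z) := 1 + μ∫η(dt)/(E(K;p,t)-z) > 0 for all p, and ψ ∈ L²(T^d) satisfies the Birman–Schwinger equation ψ(q) = μ∫ Δ_μ(K,q;z)^{-1/2} Δ_μ(K,p;z)^{-1/2} (E(K;p,q)-z)^{-1} ψ(p) η(dp). Then f(p,q) := -μ[φ(p)-φ(q)]/(E(K;p,q)-z) with φ(p) = Δ_μ(K,p;z)^{-1/2}ψ(p) satisfies H_μ(K)f = zf and f ∈ L^{2,a}((T^d)²). -/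

import Mathlib

/-!
Let `k(p,t) = (E(K;p,t) - z)⁻¹` and `Δ(p) = 1 + μ ∫ k(p,t) dη(t)`. Since `E(K;p,q) = E(K;q,p)`,
the Birman–Schwinger equation for `ψ` says exactly `Δ(p) φ(p) = μ ∫ k(p,t) φ(t) dη(t)`.
Splitting `f(p,t) = -μ φ(p) k(p,t) + μ k(p,t) φ(t)` then gives `∫ f(p,t) dη(t) = φ(p)`, and by
antisymmetry `∫ f(t,q) dη(t) = -φ(q)`. So the interaction term of `H_μ(K) f` is
`μ (φ(p) - φ(q)) = -(E(K;p,q) - z) f(p,q)`, which is `H_μ(K) f = z f`. On the compact torus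
`k` is bounded and `Δ` is bounded below, whence `φ ∈ L²` and `f ∈ L²`.
-/

open MeasureTheory Real

instance : Fact (0 < 2 * π) := ⟨by positivity⟩

/-- Equip the circle `ℝ/2πℤ` with its Haar measure. -/
noncomputable instance : MeasureSpace Real.Angle :=
  inferInstanceAs (MeasureSpace (AddCircle (2 * π)))

instance : SigmaFinite (volume : Measure Real.Angle) :=
  inferInstanceAs (SigmaFinite (volume : Measure (AddCircle (2 * π))))

/-- The lattice dispersion relation `ε(p) = 2∑ᵢ (1 - cos pⁱ)` on the torus `T^d`. -/
noncomputable def eps (d : ℕ) (p : Fin d → Real.Angle) : ℝ :=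
  2 * ∑ i, (1 - (p i).cos)

/-- The normalized Haar measure `η` on the torus `T^d`. -/
noncomputable def haarT (d : ℕ) : Measure (Fin d → Real.Angle) :=
  (ENNReal.ofReal ((2 * π) ^ d))⁻¹ • volume

/-- The three-particle dispersion `E(K;p,q) = ε(p) + ε(q) + γ ε(K - p - q)`. -/
noncomputable def Edisp (d : ℕ) (γ : ℝ) (K p q : Fin d → Real.Angle) : ℝ :=
  eps d p + eps d q + γ * eps d (K - p - q)

open Set
open scoped ENNReal

theorem Continuous.uncurry_inv_sub {X : Type*} [TopologicalSpace X] {E : X → X → ℝ} {z : ℝ}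
    (hE : Continuous (Function.uncurry E)) (hz : ∀ p q, E p q ≠ z) :
    Continuous (Function.uncurry fun p t => (E p t - z)⁻¹) :=
  (hE.sub continuous_const).inv₀ fun x => sub_ne_zero.2 (hz x.1 x.2)

theorem delta_mul_eq_integral_of_birmanSchwinger {X : Type*} [MeasurableSpace X] {ν : Measure X}
    {E : X → X → ℝ} {z μ : ℝ} {Δ ψ : X → ℝ} (hEs : ∀ p q, E p q = E q p) {q : X} (hΔ : 0 < Δ q)
    (h : ψ q = μ * ∫ p, (√(Δ q))⁻¹ * (√(Δ p))⁻¹ * (E p q - z)⁻¹ * ψ p ∂ν) :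
    Δ q * ((√(Δ q))⁻¹ * ψ q) = μ * ∫ p, (E q p - z)⁻¹ * ((√(Δ p))⁻¹ * ψ p) ∂ν := by
  have hint : (fun p => (√(Δ q))⁻¹ * (√(Δ p))⁻¹ * (E p q - z)⁻¹ * ψ p) =
      fun p => (√(Δ q))⁻¹ * ((E q p - z)⁻¹ * ((√(Δ p))⁻¹ * ψ p)) := by
    ext p; rw [hEs p q]; ring
  have hsq : (√(Δ q))⁻¹ * (√(Δ q))⁻¹ = (Δ q)⁻¹ := by rw [← mul_inv, mul_self_sqrt hΔ.le]
  rw [h, hint, integral_const_mul]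
  set G := ∫ p, (E q p - z)⁻¹ * ((√(Δ p))⁻¹ * ψ p) ∂ν
  calc Δ q * ((√(Δ q))⁻¹ * (μ * ((√(Δ q))⁻¹ * G)))
      = μ * G * (Δ q * ((√(Δ q))⁻¹ * (√(Δ q))⁻¹)) := by ring
    _ = μ * G := by rw [hsq, mul_inv_cancel₀ hΔ.ne', mul_one]

section Compact

variable {X : Type*} [TopologicalSpace X] [CompactSpace X] [MeasurableSpace X] [BorelSpace X]
  {ν : Measure X}

theorem Continuous.memLp_top_of_compactSpace {g : X → ℝ} (hg : Continuous g) : MemLp g ⊤ ν :=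
  (BoundedContinuousFunction.mkOfCompact ⟨g, hg⟩).memLp_top

theorem continuous_integral_of_continuous_uncurry [T2Space X] [FirstCountableTopology X]
    [IsFiniteMeasure ν] {k : X → X → ℝ} (hk : Continuous (Function.uncurry k)) :
    Continuous fun p => ∫ t, k p t ∂ν := by
  simpa only [Measure.restrict_univ] using
    continuous_parametric_integral_of_continuous (μ := ν) hk isCompact_univ

variable {E : X → X → ℝ} {z μ : ℝ} {φ : X → ℝ}

theorem integral_sub_div_eq_of_delta_mul [IsFiniteMeasure ν]
    (hE : Continuous (Function.uncurry E)) (hz : ∀ p q, E p q ≠ z) (hφ : Integrable φ ν) {p : X}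
    (hp : (1 + μ * ∫ t, (E p t - z)⁻¹ ∂ν) * φ p = μ * ∫ t, (E p t - z)⁻¹ * φ t ∂ν) :
    ∫ t, -μ * (φ p - φ t) / (E p t - z) ∂ν = φ p := by
  have hk : MemLp (fun t => (E p t - z)⁻¹) ⊤ ν :=
    ((hE.uncurry_inv_sub hz).comp (continuous_const.prodMk continuous_id)).memLp_top_of_compactSpace
  have hI : Integrable (fun t => (E p t - z)⁻¹) ν := hk.integrable le_top
  have hG : Integrable (fun t => (E p t - z)⁻¹ * φ t) ν := hφ.mul_of_top_right hk
  have hsplit : (fun t => -μ * (φ p - φ t) / (E p t - z)) =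
      fun t => -μ * φ p * (E p t - z)⁻¹ + μ * ((E p t - z)⁻¹ * φ t) := by
    ext t; ring
  rw [hsplit, integral_add (hI.const_mul _) (hG.const_mul _), integral_const_mul,
    integral_const_mul]
  linear_combination -hp

theorem integral_sub_div_eq_neg_of_delta_mul [IsFiniteMeasure ν]
    (hE : Continuous (Function.uncurry E)) (hEs : ∀ p q, E p q = E q p) (hz : ∀ p q, E p q ≠ z)
    (hφ : Integrable φ ν) {q : X}
    (hq : (1 + μ * ∫ t, (E q t - z)⁻¹ ∂ν) * φ q = μ * ∫ t, (E q t - z)⁻¹ * φ t ∂ν) :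
    ∫ t, -μ * (φ t - φ q) / (E t q - z) ∂ν = -φ q := by
  have hneg : (fun t => -μ * (φ t - φ q) / (E t q - z)) =
      fun t => -(-μ * (φ q - φ t) / (E q t - z)) := by
    ext t; rw [hEs t q]; ring
  rw [hneg, integral_neg, integral_sub_div_eq_of_delta_mul hE hz hφ hq]

theorem memLp_prod_sub_div [SecondCountableTopology X] [IsProbabilityMeasure ν] {r : ℝ≥0∞}
    (hE : Continuous (Function.uncurry E)) (hz : ∀ p q, E p q ≠ z) (hφ : MemLp φ r ν) :
    MemLp (fun x : X × X => -μ * (φ x.1 - φ x.2) / (E x.1 x.2 - z)) r (ν.prod ν) := by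
  have hk : MemLp (fun x : X × X => (E x.1 x.2 - z)⁻¹) ⊤ (ν.prod ν) :=
    (hE.uncurry_inv_sub hz).memLp_top_of_compactSpace
  have hdiff : MemLp (fun x : X × X => -μ * (φ x.1 - φ x.2)) r (ν.prod ν) :=
    ((hφ.comp_measurePreserving measurePreserving_fst).sub
      (hφ.comp_measurePreserving measurePreserving_snd)).const_mul (-μ)
  simpa only [div_eq_inv_mul] using hdiff.mul' hk

end Compact

instance : CompactSpace Real.Angle := inferInstanceAs (CompactSpace (AddCircle (2 * π)))
instance : BorelSpace Real.Angle := inferInstanceAs (BorelSpace (AddCircle (2 * π)))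
instance : SecondCountableTopology Real.Angle :=
  inferInstanceAs (SecondCountableTopology (AddCircle (2 * π)))

instance (d : ℕ) : IsProbabilityMeasure (haarT d) := by
  have hvol : (volume : Measure (Fin d → Real.Angle)) univ = ENNReal.ofReal ((2 * π) ^ d) := by
    rw [← pi_univ, volume_pi_pi, ENNReal.ofReal_pow (by positivity)]
    simp only [Finset.prod_const, Finset.card_univ, Fintype.card_fin]
    exact congrArg (· ^ d) (AddCircle.measure_univ (2 * π))
  constructor
  rw [haarT, Measure.smul_apply, hvol, smul_eq_mul,
    ENNReal.inv_mul_cancel (by simp; positivity) ENNReal.ofReal_ne_top]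

theorem continuous_eps (d : ℕ) : Continuous (eps d) := by
  have := Real.Angle.continuous_cos
  unfold eps
  fun_prop

theorem continuous_Edisp (d : ℕ) (γ : ℝ) (K : Fin d → Real.Angle) :
    Continuous (Function.uncurry (Edisp d γ K)) := by
  have := continuous_eps d
  unfold Edisp Function.uncurry
  fun_prop

theorem Edisp_comm (d : ℕ) (γ : ℝ) (K p q : Fin d → Real.Angle) :
    Edisp d γ K p q = Edisp d γ K q p := by
  rw [Edisp, Edisp, sub_right_comm, add_comm (eps d p)]

theorem stmt12_general (d : ℕ) (γ μ z : ℝ) (K : Fin d → Real.Angle)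
    (hz : ∀ p q, Edisp d γ K p q < z)
    (hΔ : ∀ p, 0 < 1 + μ * ∫ t, (Edisp d γ K p t - z)⁻¹ ∂(haarT d))
    (ψ : (Fin d → Real.Angle) → ℝ) (hψ : MemLp ψ 2 (haarT d))
    (hBS : ∀ᵐ q ∂(haarT d),
      ψ q = μ * ∫ p,
        (Real.sqrt (1 + μ * ∫ t, (Edisp d γ K q t - z)⁻¹ ∂(haarT d)))⁻¹
        * (Real.sqrt (1 + μ * ∫ t, (Edisp d γ K p t - z)⁻¹ ∂(haarT d)))⁻¹
        * (Edisp d γ K p q - z)⁻¹ * ψ p ∂(haarT d)) :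
    let φ : (Fin d → Real.Angle) → ℝ := fun p =>
      (Real.sqrt (1 + μ * ∫ t, (Edisp d γ K p t - z)⁻¹ ∂(haarT d)))⁻¹ * ψ p
    let f : (Fin d → Real.Angle) × (Fin d → Real.Angle) → ℝ := fun x =>
      -μ * (φ x.1 - φ x.2) / (Edisp d γ K x.1 x.2 - z)
    MemLp f 2 ((haarT d).prod (haarT d)) ∧
    (∀ p q, f (p, q) = -f (q, p)) ∧
    (∀ᵐ x ∂((haarT d).prod (haarT d)),
      Edisp d γ K x.1 x.2 * f x
        + μ * ((∫ t, f (x.1, t) ∂(haarT d)) + ∫ t, f (t, x.2) ∂(haarT d)) = z * f x) := by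
  intro φ f
  have hE := continuous_Edisp d γ K
  have hne : ∀ p q, Edisp d γ K p q ≠ z := fun p q => (hz p q).ne
  have hΔc : Continuous fun p => 1 + μ * ∫ t, (Edisp d γ K p t - z)⁻¹ ∂(haarT d) :=
    continuous_const.add
      (continuous_const.mul (continuous_integral_of_continuous_uncurry (hE.uncurry_inv_sub hne)))
  have hφ : MemLp φ 2 (haarT d) :=
    hψ.mul' (hΔc.sqrt.inv₀ fun p => (sqrt_pos.2 (hΔ p)).ne').memLp_top_of_compactSpace
  have hΔφ : ∀ᵐ p ∂(haarT d), (1 + μ * ∫ t, (Edisp d γ K p t - z)⁻¹ ∂(haarT d)) * φ p =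
      μ * ∫ t, (Edisp d γ K p t - z)⁻¹ * φ t ∂(haarT d) :=
    hBS.mono fun p hp => delta_mul_eq_integral_of_birmanSchwinger
      (Δ := fun p => 1 + μ * ∫ t, (Edisp d γ K p t - z)⁻¹ ∂(haarT d)) (Edisp_comm d γ K) (hΔ p) hp
  have hrow : ∀ᵐ p ∂(haarT d), ∫ t, f (p, t) ∂(haarT d) = φ p :=
    hΔφ.mono fun p hp =>
      integral_sub_div_eq_of_delta_mul hE hne (hφ.integrable one_le_two) hp
  have hcol : ∀ᵐ q ∂(haarT d), ∫ t, f (t, q) ∂(haarT d) = -φ q :=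
    hΔφ.mono fun q hq =>
      integral_sub_div_eq_neg_of_delta_mul hE (Edisp_comm d γ K) hne (hφ.integrable one_le_two) hq
  refine ⟨memLp_prod_sub_div hE hne hφ, fun p q => ?_, ?_⟩
  · simp only [f, Edisp_comm d γ K q p]
    ring
  · filter_upwards [measurePreserving_fst.quasiMeasurePreserving.ae hrow,
      measurePreserving_snd.quasiMeasurePreserving.ae hcol] with x hx₁ hx₂
    rw [hx₁, hx₂]
    have hden := sub_ne_zero.2 (hne x.1 x.2)
    simp only [f]
    field_simp
    ring

/-- Birman–Schwinger, direction ii: if `ψ ∈ L²(T^d)` solves the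
Birman–Schwinger equation, then `f(p,q) = -μ[φ(p)-φ(q)]/(E(K;p,q)-z)` with
`φ = Δ_μ^{-1/2}ψ` is antisymmetric, square integrable, and solves `H_μ(K)f = zf`. -/
theorem stmt12 (d : ℕ) (γ μ z : ℝ) (hγ : 0 < γ) (hμ : 0 < μ) (K : Fin d → Real.Angle)
    (hz : ∀ p q, Edisp d γ K p q < z)
    (hΔ : ∀ p, 0 < 1 + μ * ∫ t, (Edisp d γ K p t - z)⁻¹ ∂(haarT d))
    (ψ : (Fin d → Real.Angle) → ℝ) (hψ : MemLp ψ 2 (haarT d))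
    (hBS : ∀ᵐ q ∂(haarT d),
      ψ q = μ * ∫ p,
        (Real.sqrt (1 + μ * ∫ t, (Edisp d γ K q t - z)⁻¹ ∂(haarT d)))⁻¹
        * (Real.sqrt (1 + μ * ∫ t, (Edisp d γ K p t - z)⁻¹ ∂(haarT d)))⁻¹
        * (Edisp d γ K p q - z)⁻¹ * ψ p ∂(haarT d)) :
    let φ : (Fin d → Real.Angle) → ℝ := fun p =>
      (Real.sqrt (1 + μ * ∫ t, (Edisp d γ K p t - z)⁻¹ ∂(haarT d)))⁻¹ * ψ p
    let f : (Fin d → Real.Angle) × (Fin d → Real.Angle) → ℝ := fun x =>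
      -μ * (φ x.1 - φ x.2) / (Edisp d γ K x.1 x.2 - z)
    MemLp f 2 ((haarT d).prod (haarT d)) ∧
    (∀ p q, f (p, q) = -f (q, p)) ∧
    (∀ᵐ x ∂((haarT d).prod (haarT d)),
      Edisp d γ K x.1 x.2 * f x
        + μ * ((∫ t, f (x.1, t) ∂(haarT d)) + ∫ t, f (t, x.2) ∂(haarT d)) = z * f x) :=
  stmt12_general d γ μ z K hz hΔ ψ hψ hBS
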